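/- Let A be a skew left brace. The commutator subgroup of Λ_{Aᵒᵖ} = (A,·) ⋊_{λᵒᵖ} (A,∘) equals A' ⋊_{λᵒᵖ} (A,∘)', where A' is the subgroup of (A,·) generated by all a·b·a⁻¹·b⁻¹ and all a·λ_b(a⁻¹) for a,b ∈ A, and (A,∘)' is the commutator subgroup of (A,∘). -/

import Mathlib

/-- A skew left brace: a type with a group structure `(A, *)` (the additive group,
written multiplicatively) and a second group structure `(A, ∘)` (given by `circ`),
satisfying `a ∘ (b * c) = (a ∘ b) * a⁻¹ * (a ∘ c)`. -/
class SkewLeftBrace (A : Type*) extends Group A where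
  circ : A → A → A
  circ_assoc : ∀ a b c : A, circ (circ a b) c = circ a (circ b c)
  one_circ : ∀ a : A, circ 1 a = a
  circ_one : ∀ a : A, circ a 1 = a
  cinv : A → A
  cinv_circ : ∀ a : A, circ (cinv a) a = 1
  compat : ∀ a b c : A, circ a (b * c) = circ a b * a⁻¹ * circ a c

namespace SkewLeftBrace

variable {A : Type*} [SkewLeftBrace A]

/-- Type synonym for `A` carrying the multiplicative group `(A, ∘)`. -/
def Circ (A : Type*) := A

def toCirc {A : Type*} : A → Circ A := fun a => a
def ofCirc {A : Type*} : Circ A → A := fun a => a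

instance Circ.instGroup : Group (Circ A) where
  mul a b := toCirc (circ (ofCirc a) (ofCirc b))
  one := toCirc 1
  inv a := toCirc (cinv (ofCirc a))
  mul_assoc a b c := circ_assoc (A := A) a b c
  one_mul a := one_circ (A := A) a
  mul_one a := circ_one (A := A) a
  inv_mul_cancel a := cinv_circ (A := A) a

/-- The lambda map `λ_a(b) = a⁻¹ * (a ∘ b)`. -/
def lam (a b : A) : A := a⁻¹ * circ a b

/-- The opposite lambda map `λᵒᵖ_a(b) = (a ∘ b) * a⁻¹`. -/
def lamOp (a b : A) : A := circ a b * a⁻¹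

lemma circ_cinv (a : A) : circ a (cinv a) = 1 := mul_inv_cancel (toCirc a)

lemma circ_inv (a b : A) : circ a b⁻¹ = a * (circ a b)⁻¹ * a := by
  have h := compat a b b⁻¹
  rw [mul_inv_cancel, circ_one] at h
  have h2 : circ a b * a⁻¹ * circ a b⁻¹ = a := h.symm
  calc circ a b⁻¹ = (circ a b * a⁻¹)⁻¹ * (circ a b * a⁻¹ * circ a b⁻¹) := by group
    _ = a * (circ a b)⁻¹ * a := by rw [h2]; group

/-- `λ_a` as an automorphism of `(A, *)`. -/
def lamEquiv (a : A) : A ≃* A where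
  toFun := lam a
  invFun b := circ (cinv a) (a * b)
  left_inv b := by
    show circ (cinv a) (a * (a⁻¹ * circ a b)) = b
    rw [mul_inv_cancel_left, ← circ_assoc, cinv_circ, one_circ]
  right_inv b := by
    show a⁻¹ * circ a (circ (cinv a) (a * b)) = b
    rw [← circ_assoc, circ_cinv, one_circ, inv_mul_cancel_left]
  map_mul' b c := by
    show a⁻¹ * circ a (b * c) = (a⁻¹ * circ a b) * (a⁻¹ * circ a c)
    rw [compat]; group

lemma lam_circ (a b c : A) : lam (circ a b) c = lam a (lam b c) := by
  unfold lam
  rw [circ_assoc, compat, circ_inv]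
  group

/-- The lambda map as a group homomorphism `(A, ∘) → Aut(A, *)`. -/
def lamHom : Circ A →* MulAut A where
  toFun a := lamEquiv (ofCirc a)
  map_one' := by
    ext b
    show lam (1 : A) b = b
    simp [lam, one_circ]
  map_mul' a b := by
    ext c
    rw [MulAut.mul_apply]
    exact lam_circ (ofCirc a) (ofCirc b) c

/-- `λᵒᵖ_a` as an automorphism of `(A, *)`. -/
def lamOpEquiv (a : A) : MulAut A := MulAut.conj a * lamEquiv a

lemma lamOpEquiv_apply (a b : A) : lamOpEquiv a b = lamOp a b := by
  show a * (a⁻¹ * circ a b) * a⁻¹ = circ a b * a⁻¹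
  group

lemma lamOp_circ (a b c : A) : lamOp (circ a b) c = lamOp a (lamOp b c) := by
  unfold lamOp
  rw [circ_assoc, compat, circ_inv]
  group

/-- The opposite lambda map as a group homomorphism `(A, ∘) → Aut(A, *)`. -/
def lamOpHom : Circ A →* MulAut A where
  toFun a := lamOpEquiv (ofCirc a)
  map_one' := by
    ext b
    rw [lamOpEquiv_apply]
    show circ (1 : A) b * (1 : A)⁻¹ = b
    rw [one_circ]; group
  map_mul' a b := by
    ext c
    rw [MulAut.mul_apply, lamOpEquiv_apply, lamOpEquiv_apply, lamOpEquiv_apply]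
    exact lamOp_circ (ofCirc a) (ofCirc b) c

/-- The group `Λ_{Aᵒᵖ} = (A,·) ⋊_{λᵒᵖ} (A,∘)`. -/
abbrev LambdaOp (A : Type*) [SkewLeftBrace A] := SemidirectProduct A (Circ A) lamOpHom

/-- The group `Λ_A = (A,·) ⋊_{λ} (A,∘)`. -/
abbrev Lambda (A : Type*) [SkewLeftBrace A] := SemidirectProduct A (Circ A) lamHom

/-- The skew brace commutator `A'`: the subgroup of `(A,·)` generated by all
`a*b*a⁻¹*b⁻¹` and all `a * λ_b(a⁻¹)`. -/
def braceCommutator (A : Type*) [SkewLeftBrace A] : Subgroup A :=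
  Subgroup.closure
    {x : A | (∃ a b : A, x = a * b * a⁻¹ * b⁻¹) ∨ (∃ a b : A, x = a * lam b a⁻¹)}

instance braceCommutator_normal : (braceCommutator A).Normal := by
  constructor
  intro x hx g
  have h1 : g * x * g⁻¹ * x⁻¹ ∈ braceCommutator A :=
    Subgroup.subset_closure (Or.inl ⟨g, x, rfl⟩)
  have h2 : g * x * g⁻¹ = (g * x * g⁻¹ * x⁻¹) * x := by group
  rw [h2]
  exact mul_mem h1 hx

/-- `Fix(λ) = {x : λ_a(x) = x for all a}`. -/
def fixLam (A : Type*) [SkewLeftBrace A] : Set A := {x | ∀ a, lam a x = x}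

/-- The annihilator `Ann(A) = Ker(λ) ∩ Z(A,·) ∩ Fix(λ)` as a set. -/
def annSet (A : Type*) [SkewLeftBrace A] : Set A :=
  {x | (∀ b, lam x b = b) ∧ (∀ a, a * x = x * a) ∧ (∀ a, lam a x = x)}

end SkewLeftBrace

open SkewLeftBrace

/-!
`A'` contains the commutators of `(A,·)` and the elements `x⁻¹·λ_b(x)`, so `A/A'` is abelian and
`λ` (hence also `λᵒᵖ_b = conj b ∘ λ_b`) acts trivially on it. Therefore `(a, b) ↦ (a A', b (A,∘)')`
is a homomorphism from `Λ_{Aᵒᵖ}` to an abelian group, and its kernel `A' ⋊ (A,∘)'` contains the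
commutator subgroup. Conversely, `inl ⁅a, b⁆ = ⁅inl a, inl b⁆` and
`inl (a·λ_b(a⁻¹)) = ⁅inl a, inl b⁻¹ · inr b⁆`, so `inl A'` lies in the commutator subgroup, while
`(A,∘)'` is the image of the commutator subgroup under the projection to `(A,∘)`.
-/

open scoped commutatorElement

theorem commutatorElement_mem_commutator {G : Type*} [Group G] (g h : G) :
    ⁅g, h⁆ ∈ commutator G :=
  Subgroup.commutator_mem_commutator (Subgroup.mem_top g) (Subgroup.mem_top h)

namespace SkewLeftBrace

variable {A : Type*} [SkewLeftBrace A]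

open SemidirectProduct

lemma lamOpHom_apply (b : Circ A) (x : A) : lamOpHom b x = lamOp (ofCirc b) x :=
  lamOpEquiv_apply _ _

lemma commutatorElement_mem_braceCommutator (a b : A) : ⁅a, b⁆ ∈ braceCommutator A :=
  Subgroup.subset_closure (Or.inl ⟨a, b, rfl⟩)

lemma mul_lam_inv_mem_braceCommutator (a b : A) : a * lam b a⁻¹ ∈ braceCommutator A :=
  Subgroup.subset_closure (Or.inr ⟨a, b, rfl⟩)

instance : CommGroup (A ⧸ braceCommutator A) where
  mul_comm := by
    intro x y
    induction x using QuotientGroup.induction_on with | H a => ?_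
    induction y using QuotientGroup.induction_on with | H b => ?_
    rw [← QuotientGroup.mk_mul, ← QuotientGroup.mk_mul, QuotientGroup.eq]
    convert commutatorElement_mem_braceCommutator b⁻¹ a⁻¹ using 1
    group

lemma mk_lam (b x : A) : ((lam b x : A) : A ⧸ braceCommutator A) = x := by
  have h := (QuotientGroup.eq_one_iff _).2 (mul_lam_inv_mem_braceCommutator x⁻¹ b)
  rwa [inv_inv, QuotientGroup.mk_mul, QuotientGroup.mk_inv, inv_mul_eq_one, eq_comm] at h

lemma mk_lamOp (b x : A) : ((lamOp b x : A) : A ⧸ braceCommutator A) = x := by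
  have h : lamOp b x = b * lam b x * b⁻¹ := by unfold lamOp lam; group
  rw [h, QuotientGroup.mk_mul, QuotientGroup.mk_mul, QuotientGroup.mk_inv, mk_lam,
    mul_inv_cancel_comm]

noncomputable def lambdaOpAbelianize :
    LambdaOp A →* (A ⧸ braceCommutator A) × Abelianization (Circ A) :=
  SemidirectProduct.lift ((MonoidHom.inl _ _).comp (QuotientGroup.mk' _))
    ((MonoidHom.inr _ _).comp Abelianization.of)
    (fun b => by ext x <;> simp [lamOpHom_apply, mk_lamOp])

lemma mem_ker_lambdaOpAbelianize {z : LambdaOp A} :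
    z ∈ lambdaOpAbelianize.ker ↔ z.left ∈ braceCommutator A ∧ z.right ∈ commutator (Circ A) := by
  simp [lambdaOpAbelianize, SemidirectProduct.lift, ← Abelianization.ker_of]

lemma inl_mul_lam_inv_eq_commutatorElement (a b : A) :
    (inl (a * lam b a⁻¹) : LambdaOp A) = ⁅(inl a : LambdaOp A), inl b⁻¹ * inr (toCirc b)⁆ := by
  have h : a * lam b a⁻¹ = a * b⁻¹ * lamOpHom (toCirc b) a⁻¹ * b := by
    rw [lamOpHom_apply]; unfold lamOp lam ofCirc toCirc; group
  rw [h, map_mul, map_mul, map_mul, inl_aut, commutatorElement_def]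
  simp only [map_inv, mul_inv_rev, inv_inv, mul_assoc]

lemma inl_mem_commutator {x : A} (hx : x ∈ braceCommutator A) :
    (inl x : LambdaOp A) ∈ commutator (LambdaOp A) := by
  induction hx using Subgroup.closure_induction with
  | mem x hx =>
    obtain ⟨a, b, rfl⟩ | ⟨a, b, rfl⟩ := hx
    · rw [← commutatorElement_def, map_commutatorElement]
      exact commutatorElement_mem_commutator _ _
    · rw [inl_mul_lam_inv_eq_commutatorElement]
      exact commutatorElement_mem_commutator _ _
  | one => simp
  | mul x y _ _ hx hy => simpa using mul_mem hx hy
  | inv x _ hx => simpa using inv_mem hx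

lemma commutator_lambdaOp_eq_ker : commutator (LambdaOp A) = lambdaOpAbelianize.ker := by
  refine le_antisymm (Abelianization.commutator_subset_ker _) fun z hz => ?_
  obtain ⟨hzl, hzr⟩ := mem_ker_lambdaOpAbelianize.1 hz
  have hmap : commutator (Circ A) = (commutator (LambdaOp A)).map rightHom := by
    rw [commutator_def, commutator_def, Subgroup.map_commutator,
      Subgroup.map_top_of_surjective _ rightHom_surjective]
  obtain ⟨x, hx, hxz⟩ := hmap ▸ hzr
  have hxl := (mem_ker_lambdaOpAbelianize.1 (Abelianization.commutator_subset_ker _ hx)).1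
  have hz_eq : z = inl (z.left * x.left⁻¹) * x := by
    ext <;> simp [← hxz]
  rw [hz_eq]
  exact mul_mem (inl_mem_commutator (mul_mem hzl (inv_mem hxl))) hx

end SkewLeftBrace

/-- the commutator subgroup of `Λ_{Aᵒᵖ}` is `A' ⋊_{λᵒᵖ} (A,∘)'`. -/
theorem commutator_lambdaOp_eq (A : Type*) [SkewLeftBrace A] :
    ∀ z : LambdaOp A, z ∈ commutator (LambdaOp A) ↔
      (z.left ∈ braceCommutator A ∧ z.right ∈ commutator (Circ A)) := by
  intro z
  rw [commutator_lambdaOp_eq_ker, mem_ker_lambdaOpAbelianize]
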